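/- Let q be a self-join-free Boolean conjunctive query, db a database instance, and V a nonempty subset of vars(q) such that for every v ∈ V and every atom F = R(x,y) of q, if F attacks v in q then the R-relation of db is consistent. Then there exists a repair r of db such that rifi(q,r,V) equals the intersection of rifi(q,s,V) over all repairs s of db. -/

import Mathlib

open scoped Classical

/-! ## Variables, constants, relation names -/

abbrev Var : Type := ℕ
abbrev RelName : Type := ℕ

/-- A term: a variable or a constant (a non-negative rational). -/
inductive Trm : Type where
  | var : Var → Trm
  | const : ℚ≥0 → Trm
deriving DecidableEq

/-- An atom `R(x̲, y)`: relation name, primary-key arguments, remaining arguments. -/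
structure DBAtom : Type where
  rel : RelName
  keyArgs : List Trm
  nonkeyArgs : List Trm
deriving DecidableEq, Inhabited

/-- A fact: an atom without variables. -/
structure DBFact : Type where
  rel : RelName
  keyArgs : List ℚ≥0
  nonkeyArgs : List ℚ≥0
deriving DecidableEq

def Trm.var? : Trm → Option Var
  | .var v => some v
  | .const _ => none

def Trm.const? : Trm → Option ℚ≥0
  | .var _ => none
  | .const c => some c

def DBAtom.keyVars (F : DBAtom) : Finset Var := (F.keyArgs.filterMap Trm.var?).toFinset

def DBAtom.allVars (F : DBAtom) : Finset Var :=
  ((F.keyArgs ++ F.nonkeyArgs).filterMap Trm.var?).toFinset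

def DBAtom.notkeyVars (F : DBAtom) : Finset Var := F.allVars \ F.keyVars

def qVars (q : List DBAtom) : Finset Var := q.foldr (fun F s => F.allVars ∪ s) ∅

/-- Self-join-free: pairwise distinct relation names. -/
def SelfJoinFree (q : List DBAtom) : Prop := (q.map DBAtom.rel).Nodup

def KeyEqual (f g : DBFact) : Prop := f.rel = g.rel ∧ f.keyArgs = g.keyArgs

def DBConsistent (s : Finset DBFact) : Prop :=
  ∀ f ∈ s, ∀ g ∈ s, KeyEqual f g → f = g

/-- A repair: an inclusion-maximal consistent subset. -/
def IsRepair (db r : Finset DBFact) : Prop :=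
  r ⊆ db ∧ DBConsistent r ∧
    ∀ s : Finset DBFact, r ⊆ s → s ⊆ db → DBConsistent s → s = r

/-! ## Valuations (partial maps from variables to constants) -/

abbrev Assignment : Type := Var → Option ℚ≥0

def Assignment.Dom (θ : Assignment) : Set Var := {v | θ v ≠ none}

def Assignment.ExtendsA (μ θ : Assignment) : Prop :=
  ∀ (v : Var) (c : ℚ≥0), θ v = some c → μ v = some c

noncomputable def Assignment.restrict (θ : Assignment) (S : Set Var) : Assignment :=
  fun v => if v ∈ S then θ v else none

def emptyAssignment : Assignment := fun _ => none

/-- Combination of two valuations (the first takes precedence). -/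
def Assignment.comb (θ μ : Assignment) : Assignment :=
  fun v => (θ v).orElse (fun _ => μ v)

def applyTrm (θ : Assignment) : Trm → Trm
  | .var v => (θ v).elim (Trm.var v) Trm.const
  | .const c => .const c

def applyAtom (θ : Assignment) (F : DBAtom) : DBAtom :=
  ⟨F.rel, F.keyArgs.map (applyTrm θ), F.nonkeyArgs.map (applyTrm θ)⟩

def applyQ (θ : Assignment) (q : List DBAtom) : List DBAtom := q.map (applyAtom θ)

def DBAtom.toFact? (F : DBAtom) : Option DBFact := do
  let ks ← F.keyArgs.mapM Trm.const?
  let ns ← F.nonkeyArgs.mapM Trm.const?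
  pure (DBFact.mk F.rel ks ns)

def AtomIn (s : Finset DBFact) (F : DBAtom) : Prop := ∃ f ∈ s, F.toFact? = some f

/-- `(s, θ) ⊨ q`: θ extends to a valuation over dom(θ) ∪ vars(q) mapping all atoms of q into s. -/
def Entails (s : Finset DBFact) (θ : Assignment) (q : List DBAtom) : Prop :=
  ∃ μ : Assignment, μ.Dom = θ.Dom ∪ ↑(qVars q) ∧ μ.ExtendsA θ ∧
    ∀ F ∈ q, AtomIn s (applyAtom μ F)

/-! ## Functional dependencies -/

def FDSatT (N : Set (Var → ℚ≥0)) (X Y : Finset Var) : Prop :=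
  ∀ t₁ ∈ N, ∀ t₂ ∈ N, (∀ x ∈ X, t₁ x = t₂ x) → ∀ y ∈ Y, t₁ y = t₂ y

/-- Standard logical implication of functional dependencies. -/
def FDImp (fds : Set (Finset Var × Finset Var)) (X Y : Finset Var) : Prop :=
  ∀ N : Set (Var → ℚ≥0), (∀ fd ∈ fds, FDSatT N fd.1 fd.2) → FDSatT N X Y

def FDSet (q : List DBAtom) : Set (Finset Var × Finset Var) :=
  {p | ∃ F ∈ q, p = (F.keyVars, F.allVars)}

def keycl (F : DBAtom) (q : List DBAtom) : Set Var :=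
  {x | x ∈ qVars q ∧ FDImp (FDSet (q.erase F)) F.keyVars {x}}

/-! ## Attacks and the attack graph -/

def AdjIn (q : List DBAtom) (a b : Var) : Prop :=
  ∃ G ∈ q, a ∈ G.allVars ∧ b ∈ G.allVars

/-- Atom F attacks variable x in q. -/
def AttacksVar (q : List DBAtom) (F : DBAtom) (x : Var) : Prop :=
  ∃ l : List Var, (∀ v ∈ l, v ∉ keycl F q) ∧
    (∃ h, l.head? = some h ∧ h ∈ F.notkeyVars) ∧
    l.getLast? = some x ∧ l.Chain' (AdjIn q)

def AttacksAtom (q : List DBAtom) (F G : DBAtom) : Prop :=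
  ∃ x ∈ G.allVars, AttacksVar q F x

def Unattacked (q : List DBAtom) (v : Var) : Prop := ∀ F ∈ q, ¬ AttacksVar q F v

/-- The list order of q is a topological sort of its (hence acyclic) attack graph. -/
def IsTopoSort (q : List DBAtom) : Prop :=
  ∀ i j : Fin q.length, q.get i ≠ q.get j →
    AttacksAtom q (q.get i) (q.get j) → (i : ℕ) < (j : ℕ)

/-! ## Embeddings and ∀embeddings (relative to the list order as topological sort) -/

def uVars (q : List DBAtom) (ℓ : ℕ) : Finset Var := qVars (q.take ℓ)

def headKey : List DBAtom → Finset Var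
  | [] => ∅
  | F :: _ => F.keyVars

/-- ℓ-embedding of q in db. -/
def IsLEmb (q : List DBAtom) (db : Finset DBFact) (ℓ : ℕ) (θ : Assignment) : Prop :=
  θ.Dom = ↑(uVars q ℓ) ∧ Entails db θ q

/-- ℓ-∀embedding of q in db. -/
def IsForallEmb (q : List DBAtom) (db : Finset DBFact) : ℕ → Assignment → Prop
  | 0, θ => IsLEmb q db 0 θ ∧ ∀ r, IsRepair db r → Entails r emptyAssignment q
  | (ℓ + 1), θ =>
      IsLEmb q db (ℓ + 1) θ ∧
      (∀ r, IsRepair db r →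
        Entails r (θ.restrict (↑(uVars q ℓ) ∪ ↑(headKey (q.drop ℓ)))) (q.drop ℓ)) ∧
      IsForallEmb q db ℓ (θ.restrict ↑(uVars q ℓ))

/-- An embedding of q in s: a valuation over vars(q) mapping all atoms of q into s. -/
def IsEmbedding (q : List DBAtom) (s : Finset DBFact) (θ : Assignment) : Prop :=
  θ.Dom = ↑(qVars q) ∧ ∀ F ∈ q, AtomIn s (applyAtom θ F)

/-- Superfrugal repair: every embedding of q in r is a ∀embedding of q in db. -/
def Superfrugal (q : List DBAtom) (db r : Finset DBFact) : Prop :=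
  IsRepair db r ∧ ∀ θ, IsEmbedding q r θ → IsForallEmb q db q.length θ

/-! ## FD satisfaction by sets of valuations; maximal consistent subsets (MCS) -/

def AgreeOn (θ₁ θ₂ : Assignment) (X : Finset Var) : Prop := ∀ x ∈ X, θ₁ x = θ₂ x

def SatFD (N : Set Assignment) (X Y : Finset Var) : Prop :=
  ∀ θ₁ ∈ N, ∀ θ₂ ∈ N, AgreeOn θ₁ θ₂ X → AgreeOn θ₁ θ₂ Y

def SatFDs (N : Set Assignment) (q : List DBAtom) : Prop :=
  ∀ fd ∈ FDSet q, SatFD N fd.1 fd.2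

/-- Maximal consistent subset of a set M of embeddings. -/
def IsMCS (q : List DBAtom) (M N : Set Assignment) : Prop :=
  N ⊆ M ∧ SatFDs N q ∧ ∀ N', N ⊆ N' → N' ⊆ M → SatFDs N' q → N' = N

/-! ## Aggregate operators -/

structure AggOp : Type where
  app : Multiset ℚ≥0 → ℚ
  nonneg : ∀ X : Multiset ℚ≥0, X ≠ 0 → 0 ≤ app X

noncomputable def AggOp.appNN (A : AggOp) (X : Multiset ℚ≥0) : ℚ≥0 := (A.app X).toNNRat

def AggOp.Assoc (A : AggOp) : Prop :=
  ∀ X Y : Multiset ℚ≥0, X ≠ 0 → A.app (X + Y) = A.app (A.appNN X ::ₘ Y)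

def AggOp.Mono (A : AggOp) : Prop :=
  ∀ x x' : List ℚ≥0, x ≠ [] → List.Forall₂ (· ≤ ·) x x' →
    ∀ Y : Multiset ℚ≥0, A.app ↑x ≤ A.app (↑x' + Y)

def evalTrm (θ : Assignment) : Trm → ℚ≥0
  | .var v => (θ v).getD 0
  | .const c => c

/-- The multiset of r-values over a (finite) set of valuations. -/
noncomputable def valsOf (N : Set Assignment) (r : Trm) : Multiset ℚ≥0 :=
  if h : N.Finite then h.toFinset.val.map (fun θ => evalTrm θ r) else 0

/-- Primitive numerical term: a (numerical) variable of the query, or a constant. -/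
def PrimTerm (q : List DBAtom) (r : Trm) : Prop :=
  (∃ v, r = Trm.var v ∧ v ∈ qVars q) ∨ (∃ c, r = Trm.const c)

/-! ## Branches and ∀key-embeddings -/

/-- γ is a branch of the ℓ-∀embedding θ. -/
def IsBranch (q : List DBAtom) (db : Finset DBFact) (ℓ : ℕ) (θ γ : Assignment) : Prop :=
  γ.ExtendsA θ ∧
  (∀ v ∈ γ.Dom \ θ.Dom, Unattacked (applyQ θ (q.drop ℓ)) v) ∧
  (∃ μ, IsForallEmb q db q.length μ ∧ μ.ExtendsA γ)

/-- γ is an (ℓ+1)-∀key-embedding: a branch of θ with domain dom(θ) ∪ key(F_{ℓ+1}). -/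
def IsKeyEmb (q : List DBAtom) (db : Finset DBFact) (ℓ : ℕ) (θ γ : Assignment) : Prop :=
  IsBranch q db ℓ θ γ ∧ γ.Dom = θ.Dom ∪ ↑(headKey (q.drop ℓ))

/-- M(θ): all ∀embeddings of q in db extending θ. -/
def Mset (q : List DBAtom) (db : Finset DBFact) (θ : Assignment) : Set Assignment :=
  {μ | IsForallEmb q db q.length μ ∧ μ.ExtendsA θ}

/-! ## Weakly connected components of the attack graph -/

def UndirectedEdge (p : List DBAtom) (F G : DBAtom) : Prop :=
  F ∈ p ∧ G ∈ p ∧ (AttacksAtom p F G ∨ AttacksAtom p G F)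

/-- S is a maximal weakly connected component of the attack graph of p. -/
def IsWCC (p : List DBAtom) (S : Set DBAtom) : Prop :=
  ∃ F₀ ∈ p, S = {G | Relation.ReflTransGen (UndirectedEdge p) F₀ G}

/-! ## rifi, sequential proofs, n-minimality -/

/-- rifi(q, s, V): valuations over V extending to a valuation over vars(q) mapping q into s. -/
def rifi (q : List DBAtom) (s : Finset DBFact) (V : Finset Var) : Set Assignment :=
  {θ | θ.Dom = ↑V ∧ ∃ μ : Assignment, μ.Dom = ↑(qVars q) ∧ μ.ExtendsA θ ∧
      ∀ F ∈ q, AtomIn s (applyAtom μ F)}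

/-- A sequential proof of FD(p) ⊨ Z → w. -/
def IsSeqProof (p : List DBAtom) (Z : Finset Var) (w : Var) (l : List DBAtom) : Prop :=
  (∀ F ∈ l, F ∈ p) ∧
  (∀ i : Fin l.length, (l.get i).keyVars ⊆ Z ∪ qVars (l.take i.1)) ∧
  w ∈ Z ∪ qVars l

/-- n-minimal repair (with X = vars(q)). -/
def NMinimal (q : List DBAtom) (db r : Finset DBFact) : Prop :=
  IsRepair db r ∧
  ¬ ∃ s : Finset DBFact, IsRepair db s ∧
      (∀ θ, IsEmbedding q s θ → IsEmbedding q r θ) ∧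
      (∃ μ, IsEmbedding q r μ ∧ ¬ IsEmbedding q s μ)

/-! ## Descending chains for aggregate operators -/

def DescChain {α β : Type*} [LT β] (F : Multiset α → β) (s t : α) : Prop :=
  ∀ i : ℕ, F (s ::ₘ Multiset.replicate (i + 1) t) < F (s ::ₘ Multiset.replicate i t)

def BoundedBy {α β : Type*} [LT β] (F : Multiset α → β) (s t : α) (m : ℕ → α) : Prop :=
  ∀ i j : ℕ, 1 ≤ j → ∀ k' k : ℕ, k' ≤ k → k ≤ i →
    F (s ::ₘ Multiset.replicate k' t) <
      F (Multiset.replicate j (m i) + (s ::ₘ Multiset.replicate k t))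

def HasBoundedDescChain {α β : Type*} [LT β] (F : Multiset α → β) : Prop :=
  ∃ s t, DescChain F s t ∧ ∃ m : ℕ → α, BoundedBy F s t m


/-!
Call an atom of `q` *free* if it attacks no variable of `V`. By hypothesis every block of `db`
with two distinct facts either lies outside the relations of `q` or belongs to a free atom.

If a valuation `λ` maps `q \ {G}` into a consistent instance `s` and agrees on `key(G)` with an
embedding `ε` of `q` into `s`, then `λ` and `ε` also agree on `keycl(G, q)`, so taking `ε` on the
variables attacked by `G` and `λ` elsewhere yields an embedding of `q` into `s`; when `G` is free
it still extends the same valuation over `V`. Consequently, if `ε(G)` lies in a repair `P`, then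
replacing the block of `ε(G)` in `P` by a key-equal fact creates no new element of `rifi`.

The theorem follows by induction on `db`. Freezing a block with several facts to each of its
facts `f` yields repairs `r_f` whose `rifi` is least among repairs containing `f`. The exchange
step above, applied inductively on `|r_f \ P|`, shows that if `rifi(r_g) ⊈ rifi(r_f)` then
`rifi(r_f) ⊆ rifi(P)` for every repair `P` containing `g`; hence an `r_f` with inclusion-minimal
`rifi` is below every repair.
-/

def groundFact (μ : Assignment) (F : DBAtom) : DBFact :=
  ⟨F.rel, F.keyArgs.map (evalTrm μ), F.nonkeyArgs.map (evalTrm μ)⟩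

lemma mem_qVars {q : List DBAtom} {x : Var} : x ∈ qVars q ↔ ∃ F ∈ q, x ∈ F.allVars := by
  induction q with
  | nil => simp [qVars]
  | cons F q ih => simp_all [qVars]

namespace DBAtom

lemma mem_keyVars {F : DBAtom} {x : Var} : x ∈ F.keyVars ↔ Trm.var x ∈ F.keyArgs := by
  simp only [keyVars, List.mem_toFinset, List.mem_filterMap]
  constructor
  · rintro ⟨t, ht, hv⟩
    cases t <;> simp_all [Trm.var?]
  · exact fun h => ⟨_, h, rfl⟩

lemma mem_allVars {F : DBAtom} {x : Var} :
    x ∈ F.allVars ↔ Trm.var x ∈ F.keyArgs ∨ Trm.var x ∈ F.nonkeyArgs := by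
  simp only [allVars, List.mem_toFinset, List.mem_filterMap, ← List.mem_append]
  constructor
  · rintro ⟨t, ht, hv⟩
    cases t <;> simp_all [Trm.var?]
  · exact fun h => ⟨_, h, rfl⟩

lemma keyVars_subset_allVars (F : DBAtom) : F.keyVars ⊆ F.allVars :=
  fun _ hx => mem_allVars.mpr (Or.inl (mem_keyVars.mp hx))

lemma allVars_subset_qVars {q : List DBAtom} {F : DBAtom} (hF : F ∈ q) : F.allVars ⊆ qVars q :=
  fun _ hx => mem_qVars.mpr ⟨F, hF, hx⟩

end DBAtom

lemma isSome_of_dom_eq {μ : Assignment} {S : Finset Var} (hdom : μ.Dom = ↑S) {v : Var}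
    (hv : v ∈ S) : (μ v).isSome :=
  Option.ne_none_iff_isSome.mp (show v ∈ μ.Dom by rw [hdom]; exact hv)

lemma groundFact_congr {μ ν : Assignment} {F : DBAtom} (h : ∀ v ∈ F.allVars, μ v = ν v) :
    groundFact μ F = groundFact ν F := by
  have hmap : ∀ l : List Trm, (∀ v, Trm.var v ∈ l → μ v = ν v) →
      l.map (evalTrm μ) = l.map (evalTrm ν) := fun l hl =>
    List.map_congr_left fun t ht => by
      cases t with
      | var v => simp [evalTrm, hl v ht]
      | const c => rfl
  simp only [groundFact, DBFact.mk.injEq, true_and]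
  exact ⟨hmap _ fun v hv => h v (DBAtom.mem_allVars.mpr (Or.inl hv)),
    hmap _ fun v hv => h v (DBAtom.mem_allVars.mpr (Or.inr hv))⟩

lemma eq_on_keyVars_of_groundFact_keyArgs_eq {μ ν : Assignment} {F : DBAtom}
    (hμ : ∀ v ∈ F.keyVars, (μ v).isSome) (hν : ∀ v ∈ F.keyVars, (ν v).isSome)
    (h : (groundFact μ F).keyArgs = (groundFact ν F).keyArgs) :
    ∀ x ∈ F.keyVars, μ x = ν x := by
  intro x hx
  have := List.map_inj_left.mp h _ (DBAtom.mem_keyVars.mp hx)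
  obtain ⟨c, hc⟩ := Option.isSome_iff_exists.mp (hμ x hx)
  obtain ⟨d, hd⟩ := Option.isSome_iff_exists.mp (hν x hx)
  simp_all [evalTrm]

lemma mapM_const?_map_applyTrm (μ : Assignment) (l : List Trm)
    (h : ∀ v, Trm.var v ∈ l → (μ v).isSome) :
    (l.map (applyTrm μ)).mapM Trm.const? = some (l.map (evalTrm μ)) := by
  induction l with
  | nil => rfl
  | cons t ts ih =>
    have ht : (applyTrm μ t).const? = some (evalTrm μ t) := by
      cases t with
      | var v =>
        obtain ⟨c, hc⟩ := Option.isSome_iff_exists.mp (h v List.mem_cons_self)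
        simp [applyTrm, evalTrm, hc, Trm.const?]
      | const c => rfl
    simp only [List.map_cons, List.mapM_cons, ht,
      ih fun v hv => h v (List.mem_cons_of_mem _ hv)]
    rfl

lemma atomIn_applyAtom_iff {s : Finset DBFact} {μ : Assignment} {F : DBAtom}
    (h : ∀ v ∈ F.allVars, (μ v).isSome) :
    AtomIn s (applyAtom μ F) ↔ groundFact μ F ∈ s := by
  have hfact : (applyAtom μ F).toFact? = some (groundFact μ F) := by
    simp only [DBAtom.toFact?, applyAtom,
      mapM_const?_map_applyTrm μ F.keyArgs fun v hv => h v (DBAtom.mem_allVars.mpr (Or.inl hv)),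
      mapM_const?_map_applyTrm μ F.nonkeyArgs fun v hv => h v (DBAtom.mem_allVars.mpr (Or.inr hv))]
    rfl
  simp [AtomIn, hfact]

lemma mem_rifi_iff {q : List DBAtom} {s : Finset DBFact} {V : Finset Var} {θ : Assignment} :
    θ ∈ rifi q s V ↔ θ.Dom = ↑V ∧ ∃ μ : Assignment, μ.Dom = ↑(qVars q) ∧
      μ.ExtendsA θ ∧ ∀ F ∈ q, groundFact μ F ∈ s := by
  refine and_congr_right fun _ => exists_congr fun μ => ?_
  refine and_congr_right fun hμ => and_congr_right fun _ => forall₂_congr fun F hF => ?_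
  exact atomIn_applyAtom_iff fun v hv => isSome_of_dom_eq hμ (DBAtom.allVars_subset_qVars hF hv)

lemma fdSatT_groundFact_of_consistent {s : Finset DBFact} (hs : DBConsistent s) (G : DBAtom) :
    FDSatT {t | groundFact (fun v => some (t v)) G ∈ s} G.keyVars G.allVars := by
  intro t₁ h₁ t₂ h₂ hkey y hy
  have hkeyArgs : G.keyArgs.map (evalTrm fun v => some (t₁ v)) =
      G.keyArgs.map (evalTrm fun v => some (t₂ v)) :=
    List.map_congr_left fun t ht => by
      cases t with
      | var v => simp [evalTrm, hkey v (DBAtom.mem_keyVars.mpr ht)]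
      | const c => rfl
  have heq := hs _ h₁ _ h₂ ⟨rfl, hkeyArgs⟩
  simp only [groundFact, DBFact.mk.injEq, List.map_inj_left] at heq
  rcases DBAtom.mem_allVars.mp hy with hy | hy
  · simpa [evalTrm] using heq.2.1 _ hy
  · simpa [evalTrm] using heq.2.2 _ hy

lemma eq_on_keycl {q : List DBAtom} {F : DBAtom} {s : Finset DBFact} (hs : DBConsistent s)
    {μ₁ μ₂ : Assignment} (hdom₁ : μ₁.Dom = ↑(qVars q)) (hdom₂ : μ₂.Dom = ↑(qVars q))
    (h₁ : ∀ G ∈ q.erase F, groundFact μ₁ G ∈ s) (h₂ : ∀ G ∈ q.erase F, groundFact μ₂ G ∈ s)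
    (hkey : ∀ x ∈ F.keyVars, μ₁ x = μ₂ x) {x : Var} (hx : x ∈ keycl F q) : μ₁ x = μ₂ x := by
  obtain ⟨hxq, himp⟩ := hx
  have hgetD : ∀ (μ : Assignment) (G : DBAtom),
      groundFact (fun v => some ((μ v).getD 0)) G = groundFact μ G := fun μ G => by
    simp only [groundFact, DBFact.mk.injEq, true_and]
    constructor <;> exact List.map_congr_left fun t _ => by cases t <;> rfl
  have hN : ∀ fd ∈ FDSet (q.erase F), FDSatT
      {t | ∀ G ∈ q.erase F, groundFact (fun v => some (t v)) G ∈ s} fd.1 fd.2 := by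
    rintro _ ⟨G, hG, rfl⟩ t₁ ht₁ t₂ ht₂
    exact fdSatT_groundFact_of_consistent hs G t₁ (ht₁ G hG) t₂ (ht₂ G hG)
  have := himp _ hN (fun v => (μ₁ v).getD 0) (fun G hG => (hgetD μ₁ G).symm ▸ h₁ G hG)
    (fun v => (μ₂ v).getD 0) (fun G hG => (hgetD μ₂ G).symm ▸ h₂ G hG)
    (fun y hy => by simp [hkey y hy]) x (Finset.mem_singleton_self x)
  obtain ⟨c₁, hc₁⟩ := Option.isSome_iff_exists.mp (isSome_of_dom_eq hdom₁ hxq)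
  obtain ⟨c₂, hc₂⟩ := Option.isSome_iff_exists.mp (isSome_of_dom_eq hdom₂ hxq)
  simp_all

lemma keyVars_subset_keycl {q : List DBAtom} {F : DBAtom} (hF : F ∈ q) :
    ↑F.keyVars ⊆ keycl F q := fun x hx =>
  ⟨DBAtom.allVars_subset_qVars hF (F.keyVars_subset_allVars hx), fun _ _ _ _ _ _ hagree _ hy =>
    (Finset.mem_singleton.mp hy) ▸ hagree x hx⟩

namespace AttacksVar

variable {q : List DBAtom} {F : DBAtom}

lemma notMem_keycl {x : Var} (h : AttacksVar q F x) : x ∉ keycl F q := by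
  obtain ⟨l, hl, -, hlast, -⟩ := h
  exact hl x (List.mem_of_getLast? hlast)

lemma of_mem_notkeyVars {x : Var} (hx : x ∈ F.notkeyVars) (hk : x ∉ keycl F q) :
    AttacksVar q F x :=
  ⟨[x], by simpa using hk, ⟨x, rfl, hx⟩, rfl, List.isChain_singleton x⟩

lemma extend {G : DBAtom} {a b : Var} (h : AttacksVar q F a) (hG : G ∈ q)
    (ha : a ∈ G.allVars) (hb : b ∈ G.allVars) (hbk : b ∉ keycl F q) : AttacksVar q F b := by
  obtain ⟨l, hl, ⟨c, hc, hcF⟩, hlast, hchain⟩ := h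
  have hne : l ≠ [] := by rintro rfl; simp at hc
  refine ⟨l ++ [b], ?_, ⟨c, by rwa [List.head?_append_of_ne_nil _ hne], hcF⟩,
    List.getLast?_concat, ?_⟩
  · simpa [or_imp, forall_and] using ⟨hl, hbk⟩
  · refine List.isChain_append.mpr ⟨hchain, List.isChain_singleton b, ?_⟩
    simp only [hlast, Option.mem_some_iff, List.head?_cons]
    rintro _ rfl _ rfl
    exact ⟨G, hG, ha, hb⟩

end AttacksVar

/-- The splice: `ν` takes `μ₂` on the variables attacked by `F` and `μ₁` elsewhere. -/
lemma exists_embedding_splice {q : List DBAtom} (hnd : q.Nodup) {F : DBAtom} (hF : F ∈ q)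
    {s : Finset DBFact} (hs : DBConsistent s) {μ₁ μ₂ : Assignment}
    (hdom₁ : μ₁.Dom = ↑(qVars q)) (hdom₂ : μ₂.Dom = ↑(qVars q))
    (h₁ : ∀ G ∈ q.erase F, groundFact μ₁ G ∈ s) (h₂ : ∀ G ∈ q, groundFact μ₂ G ∈ s)
    (hkey : ∀ x ∈ F.keyVars, μ₁ x = μ₂ x) :
    ∃ ν : Assignment, ν.Dom = ↑(qVars q) ∧ (∀ v, ¬ AttacksVar q F v → ν v = μ₁ v) ∧
      ∀ G ∈ q, groundFact ν G ∈ s := by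
  set ν : Assignment := fun v => if AttacksVar q F v then μ₂ v else μ₁ v with hν
  have hν₂ : ∀ y, AttacksVar q F y ∨ y ∈ keycl F q → ν y = μ₂ y := by
    rintro y (hy | hy)
    · simp [hν, hy]
    · simp only [hν, if_neg fun h : AttacksVar q F y => h.notMem_keycl hy]
      exact eq_on_keycl hs hdom₁ hdom₂ h₁ (fun G hG => h₂ G (List.mem_of_mem_erase hG)) hkey hy
  refine ⟨ν, ?_, fun v hv => by simp [hν, hv], fun G hG => ?_⟩
  · ext v
    by_cases hv : AttacksVar q F v
    · simpa [Assignment.Dom, hν, hv] using Set.ext_iff.mp hdom₂ v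
    · simpa [Assignment.Dom, hν, hv] using Set.ext_iff.mp hdom₁ v
  by_cases hGF : G = F ∨ ∃ a ∈ G.allVars, AttacksVar q F a
  · have hcover : ∀ y ∈ G.allVars, AttacksVar q F y ∨ y ∈ keycl F q := by
      intro y hy
      by_contra! h
      rcases hGF with rfl | ⟨a, ha, hatt⟩
      · exact h.1 (.of_mem_notkeyVars
          (Finset.mem_sdiff.mpr ⟨hy, fun hk => h.2 (keyVars_subset_keycl hF hk)⟩) h.2)
      · exact h.1 (hatt.extend hG ha hy h.2)
    rw [groundFact_congr fun y hy => hν₂ y (hcover y hy)]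
    exact h₂ G hG
  · push Not at hGF
    rw [groundFact_congr (ν := μ₁) fun y hy => by simp [hν, hGF.2 y hy]]
    exact h₁ G (hnd.mem_erase_iff.mpr ⟨hGF.1, hG⟩)

namespace KeyEqual

lemma refl (f : DBFact) : KeyEqual f f := ⟨rfl, rfl⟩

lemma symm {f g : DBFact} (h : KeyEqual f g) : KeyEqual g f := ⟨h.1.symm, h.2.symm⟩

lemma trans {f g h : DBFact} (h₁ : KeyEqual f g) (h₂ : KeyEqual g h) : KeyEqual f h :=
  ⟨h₁.1.trans h₂.1, h₁.2.trans h₂.2⟩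

end KeyEqual

lemma DBConsistent.mono {s t : Finset DBFact} (h : s ⊆ t) (ht : DBConsistent t) :
    DBConsistent s := fun f hf g hg => ht f (h hf) g (h hg)

lemma IsRepair.eq_self {db r : Finset DBFact} (hr : IsRepair db r) (hdb : DBConsistent db) :
    r = db :=
  (hr.2.2 db hr.1 subset_rfl hdb).symm

lemma IsRepair.exists_keyEqual_mem {db r : Finset DBFact} (hr : IsRepair db r) {f : DBFact}
    (hf : f ∈ db) : ∃ f' ∈ r, KeyEqual f' f := by
  by_contra! h
  have hcons : DBConsistent (insert f r) := by
    intro a ha b hb hab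
    rcases Finset.mem_insert.mp ha with rfl | har <;>
      rcases Finset.mem_insert.mp hb with rfl | hbr
    · rfl
    · exact absurd hab.symm (h b hbr)
    · exact absurd hab (h a har)
    · exact hr.2.1 a har b hbr hab
  have hfr : f ∈ r := hr.2.2 _ (Finset.subset_insert f r) (Finset.insert_subset hf hr.1) hcons ▸
    Finset.mem_insert_self f r
  exact h f hfr (.refl f)

noncomputable def replaceBlock (p : Finset DBFact) (f : DBFact) : Finset DBFact :=
  insert f (p.filter fun x => ¬ KeyEqual x f)

section replaceBlock

variable {db p : Finset DBFact} {f x : DBFact}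

lemma mem_replaceBlock : x ∈ replaceBlock p f ↔ x = f ∨ (x ∈ p ∧ ¬ KeyEqual x f) := by
  simp [replaceBlock]

lemma mem_replaceBlock_self (p : Finset DBFact) (f : DBFact) : f ∈ replaceBlock p f :=
  mem_replaceBlock.mpr (Or.inl rfl)

lemma replaceBlock_subset (hp : p ⊆ db) (hf : f ∈ db) : replaceBlock p f ⊆ db := by
  intro x hx
  rcases mem_replaceBlock.mp hx with rfl | ⟨hx, -⟩
  exacts [hf, hp hx]

lemma subset_replaceBlock {s : Finset DBFact} (hs : DBConsistent s) (hsdb : s ⊆ db)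
    (hfs : f ∈ s) : s ⊆ replaceBlock db f := by
  intro x hx
  by_cases hxf : KeyEqual x f
  · exact hs x hx f hfs hxf ▸ mem_replaceBlock_self db f
  · exact mem_replaceBlock.mpr (Or.inr ⟨hsdb hx, hxf⟩)

lemma replaceBlock_ssubset (hf : f ∈ db) (hx : x ∈ db) (hxf : x ≠ f) (hke : KeyEqual x f) :
    replaceBlock db f ⊂ db :=
  Finset.ssubset_iff_subset_ne.mpr ⟨replaceBlock_subset subset_rfl hf, fun h =>
    (mem_replaceBlock.mp (h ▸ hx)).elim hxf fun h => h.2 hke⟩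

lemma sdiff_replaceBlock_ssubset {A : Finset DBFact} (hA : DBConsistent A) (hxA : x ∈ A)
    (hxp : x ∉ p) : A \ replaceBlock p x ⊂ A \ p := by
  refine Finset.ssubset_iff_subset_ne.mpr ⟨fun z hz => ?_, fun h => ?_⟩
  · obtain ⟨hzA, hz⟩ := Finset.mem_sdiff.mp hz
    refine Finset.mem_sdiff.mpr ⟨hzA, fun hzp => hz ?_⟩
    by_cases hzx : KeyEqual z x
    · exact hA z hzA x hxA hzx ▸ mem_replaceBlock_self p x
    · exact mem_replaceBlock.mpr (Or.inr ⟨hzp, hzx⟩)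
  · have := h ▸ Finset.mem_sdiff.mpr ⟨hxA, hxp⟩
    exact (Finset.mem_sdiff.mp this).2 (mem_replaceBlock_self p x)

lemma DBConsistent.replaceBlock (hp : DBConsistent p) (f : DBFact) :
    DBConsistent (replaceBlock p f) := by
  intro a ha b hb hab
  rcases mem_replaceBlock.mp ha with rfl | ⟨ha, ha'⟩ <;>
    rcases mem_replaceBlock.mp hb with rfl | ⟨hb, hb'⟩
  · rfl
  · exact absurd hab.symm hb'
  · exact absurd hab ha'
  · exact hp a ha b hb hab

lemma IsRepair.replaceBlock (hp : IsRepair db p) (hf : f ∈ db) :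
    IsRepair db (replaceBlock p f) := by
  refine ⟨replaceBlock_subset hp.1 hf, hp.2.1.replaceBlock f, fun s hsub hsdb hs => ?_⟩
  refine Finset.Subset.antisymm (fun x hx => ?_) hsub
  have hfs := hsub (mem_replaceBlock_self p f)
  by_cases hxf : KeyEqual x f
  · exact hs x hx f hfs hxf ▸ mem_replaceBlock_self p f
  obtain ⟨y, hyp, hyx⟩ := hp.exists_keyEqual_mem (hsdb hx)
  have hys : y ∈ s := hsub (mem_replaceBlock.mpr (Or.inr ⟨hyp, fun h => hxf (hyx.symm.trans h)⟩))
  exact mem_replaceBlock.mpr (Or.inr ⟨hs y hys x hx hyx ▸ hyp, hxf⟩)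

lemma isRepair_replaceBlock_iff (hf : f ∈ db) :
    IsRepair (replaceBlock db f) p ↔ IsRepair db p ∧ f ∈ p := by
  refine ⟨fun hp => ?_, fun ⟨hp, hfp⟩ => ⟨subset_replaceBlock hp.2.1 hp.1 hfp, hp.2.1,
    fun s hps hsdb hs => hp.2.2 s hps (hsdb.trans (replaceBlock_subset subset_rfl hf)) hs⟩⟩
  obtain ⟨f', hf'p, hf'f⟩ := hp.exists_keyEqual_mem (mem_replaceBlock_self db f)
  have hfp : f ∈ p := by
    rcases mem_replaceBlock.mp (hp.1 hf'p) with rfl | ⟨-, h⟩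
    exacts [hf'p, absurd hf'f h]
  exact ⟨⟨hp.1.trans (replaceBlock_subset subset_rfl hf), hp.2.1, fun s hps hsdb hs =>
    hp.2.2 s hps (subset_replaceBlock hs hsdb (hps hfp)) hs⟩, hfp⟩

end replaceBlock

def AttackersConsistent (q : List DBAtom) (V : Finset Var) (db : Finset DBFact) : Prop :=
  ∀ v ∈ V, ∀ F ∈ q, AttacksVar q F v → DBConsistent (db.filter fun f => f.rel = F.rel)

namespace AttackersConsistent

variable {q : List DBAtom} {V : Finset Var} {db : Finset DBFact}

lemma mono {db' : Finset DBFact} (h : db' ⊆ db) (hcons : AttackersConsistent q V db) :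
    AttackersConsistent q V db' := fun v hv F hF hatt =>
  (hcons v hv F hF hatt).mono (Finset.filter_subset_filter _ h)

lemma not_attacksVar (hcons : AttackersConsistent q V db) {G : DBAtom} (hG : G ∈ q)
    {x y : DBFact} (hx : x ∈ db) (hy : y ∈ db) (hne : x ≠ y) (hxy : KeyEqual x y)
    (hyG : y.rel = G.rel) : ∀ v ∈ V, ¬ AttacksVar q G v := fun v hv hatt =>
  hne (hcons v hv G hG hatt x (Finset.mem_filter.mpr ⟨hx, hxy.1.trans hyG⟩) y
    (Finset.mem_filter.mpr ⟨hy, hyG⟩) hxy)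

end AttackersConsistent

section Exchange

variable {q : List DBAtom} {V : Finset Var}

lemma mem_rifi_of_mem_rifi_replaceBlock (hsjf : SelfJoinFree q) {P : Finset DBFact}
    (hP : DBConsistent P) {ε : Assignment} (hεdom : ε.Dom = ↑(qVars q))
    (hε : ∀ H ∈ q, groundFact ε H ∈ P) {G : DBAtom} (hG : G ∈ q)
    (hGV : ∀ v ∈ V, ¬ AttacksVar q G v) {x : DBFact} (hx : KeyEqual x (groundFact ε G))
    {θ : Assignment} (hθ : θ ∈ rifi q (replaceBlock P x) V) : θ ∈ rifi q P V := by
  obtain ⟨hθdom, μ, hμdom, hμθ, hμ⟩ := mem_rifi_iff.mp hθ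
  have hG_of_eq : ∀ H ∈ q, groundFact μ H = x → H = G := fun H hH h =>
    List.inj_on_of_nodup_map hsjf hH hG ((congrArg DBFact.rel h).trans hx.1)
  have hμP : ∀ H ∈ q, groundFact μ H ≠ x → groundFact μ H ∈ P := fun H hH hne =>
    ((mem_replaceBlock.mp (hμ H hH)).resolve_left hne).1
  by_cases hμG : groundFact μ G = x
  · have hGq := DBAtom.allVars_subset_qVars hG
    have hkey := eq_on_keyVars_of_groundFact_keyArgs_eq
      (fun v hv => isSome_of_dom_eq hμdom (hGq (G.keyVars_subset_allVars hv)))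
      (fun v hv => isSome_of_dom_eq hεdom (hGq (G.keyVars_subset_allVars hv))) (hμG ▸ hx.2)
    obtain ⟨ν, hνdom, hνμ, hν⟩ := exists_embedding_splice (hsjf.of_map _) hG hP hμdom hεdom
      (fun H hH => hμP H (List.mem_of_mem_erase hH) fun h =>
        ((hsjf.of_map _).mem_erase_iff.mp hH).1 (hG_of_eq H (List.mem_of_mem_erase hH) h))
      hε hkey
    refine mem_rifi_iff.mpr ⟨hθdom, ν, hνdom, fun v c hv => ?_, hν⟩
    have hvV : v ∈ (V : Set Var) := hθdom ▸ (show θ v ≠ none by simp [hv])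
    exact hνμ v (hGV v hvV) ▸ hμθ v c hv
  · exact mem_rifi_iff.mpr ⟨hθdom, μ, hμdom, hμθ, fun H hH =>
      hμP H hH fun h => hμG (hG_of_eq H hH h ▸ h)⟩

lemma rifi_subset_of_certain_not_mem (hsjf : SelfJoinFree q) {db : Finset DBFact}
    (hcons : AttackersConsistent q V db) {fA fB : DBFact} (hAB : KeyEqual fA fB)
    {A : Finset DBFact} (hA : IsRepair db A) (hfA : fA ∈ A)
    (hAmin : ∀ p, IsRepair db p → fA ∈ p → rifi q A V ⊆ rifi q p V)
    {γ : Assignment} (hγA : γ ∉ rifi q A V) (hγ : ∀ p, IsRepair db p → fB ∈ p → γ ∈ rifi q p V)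
    {P : Finset DBFact} (hP : IsRepair db P) (hfB : fB ∈ P) : rifi q A V ⊆ rifi q P V := by
  obtain ⟨n, hn⟩ : ∃ n, (A \ P).card = n := ⟨_, rfl⟩
  induction n using Nat.strong_induction_on generalizing P with
  | _ n ih =>
  obtain ⟨hγdom, ε, hεdom, hεγ, hε⟩ := mem_rifi_iff.mp (hγ P hP hfB)
  obtain ⟨G, hG, hεGA⟩ : ∃ G ∈ q, groundFact ε G ∉ A := by
    by_contra! h
    exact hγA (mem_rifi_iff.mpr ⟨hγdom, ε, hεdom, hεγ, h⟩)
  obtain ⟨x, hxA, hx⟩ := hA.exists_keyEqual_mem (hP.1 (hε G hG))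
  have hxε : x ≠ groundFact ε G := fun h => hεGA (h ▸ hxA)
  have hxP : x ∉ P := fun h => hxε (hP.2.1 x h _ (hε G hG) hx)
  have hGV := hcons.not_attacksVar hG (hA.1 hxA) (hP.1 (hε G hG)) hxε hx rfl
  intro θ hθ
  refine mem_rifi_of_mem_rifi_replaceBlock hsjf hP.2.1 hεdom hε hG hGV hx ?_
  by_cases hεB : groundFact ε G = fB
  · obtain rfl : x = fA := hA.2.1 x hxA fA hfA (hx.trans (hεB ▸ hAB.symm))
    exact hAmin _ (hP.replaceBlock (hA.1 hxA)) (mem_replaceBlock_self P x) hθ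
  · have hfB' : fB ∈ replaceBlock P x := mem_replaceBlock.mpr (Or.inr ⟨hfB, fun h =>
      hεB (hP.2.1 _ (hε G hG) fB hfB (hx.symm.trans h.symm))⟩)
    exact ih _ (hn ▸ Finset.card_lt_card (sdiff_replaceBlock_ssubset hA.2.1 hxA hxP))
      (hP.replaceBlock (hA.1 hxA)) hfB' rfl hθ

theorem exists_isRepair_rifi_subset (hsjf : SelfJoinFree q) (db : Finset DBFact)
    (hcons : AttackersConsistent q V db) :
    ∃ r, IsRepair db r ∧ ∀ p, IsRepair db p → rifi q r V ⊆ rifi q p V := by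
  induction db using Finset.strongInduction with
  | H db ih =>
  by_cases hdb : DBConsistent db
  · refine ⟨db, ⟨subset_rfl, hdb, fun s hs hsdb _ => subset_antisymm hsdb hs⟩, fun p hp => ?_⟩
    rw [hp.eq_self hdb]
  obtain ⟨f₁, hf₁, f₂, hf₂, hke, hne⟩ : ∃ f₁ ∈ db, ∃ f₂ ∈ db, KeyEqual f₁ f₂ ∧ f₁ ≠ f₂ := by
    simpa [DBConsistent] using hdb
  set block := db.filter (KeyEqual · f₁)
  have hfrozen : ∀ f ∈ block, ∃ r, (IsRepair db r ∧ f ∈ r) ∧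
      ∀ p, IsRepair db p → f ∈ p → rifi q r V ⊆ rifi q p V := by
    intro f hf
    obtain ⟨hfdb, hff₁⟩ := Finset.mem_filter.mp hf
    obtain ⟨g, hg, hgf, hgne⟩ : ∃ g ∈ db, KeyEqual g f ∧ g ≠ f := by
      by_cases h : f = f₁
      · exact ⟨f₂, hf₂, h ▸ hke.symm, h ▸ hne.symm⟩
      · exact ⟨f₁, hf₁, hff₁.symm, Ne.symm h⟩
    obtain ⟨r, hr, hrmin⟩ := ih _ (replaceBlock_ssubset hfdb hg hgne hgf)
      (hcons.mono (replaceBlock_subset subset_rfl hfdb))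
    exact ⟨r, (isRepair_replaceBlock_iff hfdb).mp hr, fun p hp hfp =>
      hrmin p ((isRepair_replaceBlock_iff hfdb).mpr ⟨hp, hfp⟩)⟩
  choose! r hr hrmin using hfrozen
  obtain ⟨m, hm, hmmin⟩ := block.exists_minimalFor (fun f => rifi q (r f) V)
    ⟨f₁, Finset.mem_filter.mpr ⟨hf₁, .refl f₁⟩⟩
  refine ⟨r m, (hr m hm).1, fun p hp => ?_⟩
  obtain ⟨f, hfp, hff₁⟩ := hp.exists_keyEqual_mem hf₁
  have hf : f ∈ block := Finset.mem_filter.mpr ⟨hp.1 hfp, hff₁⟩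
  by_cases hsub : rifi q (r f) V ⊆ rifi q (r m) V
  · exact (hmmin hf hsub).trans (hrmin f hf p hp hfp)
  obtain ⟨γ, hγf, hγm⟩ := Set.not_subset.mp hsub
  exact rifi_subset_of_certain_not_mem hsjf hcons ((Finset.mem_filter.mp hm).2.trans hff₁.symm)
    (hr m hm).1 (hr m hm).2 (hrmin m hm) hγm (fun p hp hfp => hrmin f hf p hp hfp hγf) hp hfp

end Exchange

theorem stmt3_general
    (q : List DBAtom) (hsjf : SelfJoinFree q)
    (db : Finset DBFact)
    (V : Finset Var)
    (hcons : ∀ v ∈ V, ∀ F ∈ q, AttacksVar q F v →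
      DBConsistent (db.filter (fun f => f.rel = F.rel))) :
    ∃ r : Finset DBFact, IsRepair db r ∧
      rifi q r V = ⋂ (s : Finset DBFact) (_ : IsRepair db s), rifi q s V := by
  obtain ⟨r, hr, hmin⟩ := exists_isRepair_rifi_subset hsjf db hcons
  exact ⟨r, hr, Set.Subset.antisymm (Set.subset_iInter₂ hmin) (Set.iInter₂_subset r hr)⟩

/-- If every atom attacking a variable of V has a consistent relation in db,
some repair realizes the intersection of rifi over all repairs. -/
theorem stmt3
    (q : List DBAtom) (hsjf : SelfJoinFree q)
    (db : Finset DBFact)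
    (V : Finset Var) (hV : V.Nonempty) (hVsub : V ⊆ qVars q)
    (hcons : ∀ v ∈ V, ∀ F ∈ q, AttacksVar q F v →
      DBConsistent (db.filter (fun f => f.rel = F.rel))) :
    ∃ r : Finset DBFact, IsRepair db r ∧
      rifi q r V = ⋂ (s : Finset DBFact) (_ : IsRepair db s), rifi q s V :=
  stmt3_general q hsjf db V hcons
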